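/- arXiv:2012.01753 — 2 statements merged into one kernel-verified Lean document; each statement's English description precedes it below -/
import Mathlib

section
/- Let c > 0 and k > 0 with c·k < 1, and set k̃ = k/√(1 − c²k²). Then k̃ satisfies the nonlocal dispersion relation ∫_ℝ (1 − e^{i k̃ s}) · (1/(2c³)) e^{-|s|/c} ds = k². -/
/-!
The Fourier transform of the Laplace kernel `e^{-a|s|}` is `2a / (a² + t²)`: on each half-line
the integrand is a single complex exponential `e^{(it ∓ a)s}`. Writing `1 - e^{ik̃s}` as
`e^{i0s} - e^{ik̃s}`, the nonlocal symbol is `(1/(2c³)) (2c - 2c/(1 + c²k̃²)) = k̃²/(1 + c²k̃²)`,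
which is `k²` exactly when `k̃² (1 - c²k²) = k²`.
-/

open MeasureTheory Set Complex

section LaplaceKernel

variable {a : ℝ} (t : ℝ)

lemma cexp_mul_exp_neg_mul_abs_eqOn_Iic :
    EqOn (fun s : ℝ => cexp (I * t * s) * (Real.exp (-a * |s|) : ℂ))
      (fun s : ℝ => cexp ((I * t + a) * s)) (Iic 0) := by
  intro s hs
  simp only [abs_of_nonpos (mem_Iic.mp hs), ofReal_exp, ← Complex.exp_add]
  push_cast
  ring_nf

lemma cexp_mul_exp_neg_mul_abs_eqOn_Ioi :
    EqOn (fun s : ℝ => cexp (I * t * s) * (Real.exp (-a * |s|) : ℂ))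
      (fun s : ℝ => cexp ((I * t - a) * s)) (Ioi 0) := by
  intro s hs
  simp only [abs_of_pos (mem_Ioi.mp hs), ofReal_exp, ← Complex.exp_add]
  push_cast
  ring_nf

lemma integrableOn_cexp_mul_exp_neg_mul_abs_Iic (ha : 0 < a) :
    IntegrableOn (fun s : ℝ => cexp (I * t * s) * (Real.exp (-a * |s|) : ℂ)) (Iic 0) :=
  (integrableOn_exp_mul_complex_Iic (by simpa using ha) 0).congr_fun
    (cexp_mul_exp_neg_mul_abs_eqOn_Iic t).symm measurableSet_Iic

lemma integrableOn_cexp_mul_exp_neg_mul_abs_Ioi (ha : 0 < a) :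
    IntegrableOn (fun s : ℝ => cexp (I * t * s) * (Real.exp (-a * |s|) : ℂ)) (Ioi 0) :=
  (integrableOn_exp_mul_complex_Ioi (by simpa using ha) 0).congr_fun
    (cexp_mul_exp_neg_mul_abs_eqOn_Ioi t).symm measurableSet_Ioi

lemma integrable_cexp_mul_exp_neg_mul_abs (ha : 0 < a) :
    Integrable (fun s : ℝ => cexp (I * t * s) * (Real.exp (-a * |s|) : ℂ)) := by
  rw [← integrableOn_univ, ← Iic_union_Ioi (a := 0)]
  exact (integrableOn_cexp_mul_exp_neg_mul_abs_Iic t ha).union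
    (integrableOn_cexp_mul_exp_neg_mul_abs_Ioi t ha)

lemma integral_cexp_mul_exp_neg_mul_abs (ha : 0 < a) :
    ∫ s : ℝ, cexp (I * t * s) * (Real.exp (-a * |s|) : ℂ) = 2 * a / (a ^ 2 + t ^ 2) := by
  rw [← intervalIntegral.integral_Iic_add_Ioi (integrableOn_cexp_mul_exp_neg_mul_abs_Iic t ha)
      (integrableOn_cexp_mul_exp_neg_mul_abs_Ioi t ha),
    setIntegral_congr_fun measurableSet_Iic (cexp_mul_exp_neg_mul_abs_eqOn_Iic t),
    setIntegral_congr_fun measurableSet_Ioi (cexp_mul_exp_neg_mul_abs_eqOn_Ioi t),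
    integral_exp_mul_complex_Iic (by simpa using ha),
    integral_exp_mul_complex_Ioi (by simpa using ha)]
  have hplus : I * t + a ≠ 0 := fun h => by simpa [ha.ne'] using congrArg re h
  have hminus : I * t - a ≠ 0 := fun h => by simpa [ha.ne'] using congrArg re h
  have hsum : (a : ℂ) ^ 2 + t ^ 2 ≠ 0 := by exact_mod_cast (by positivity : a ^ 2 + t ^ 2 ≠ 0)
  simp only [ofReal_zero, mul_zero, Complex.exp_zero]
  field_simp
  linear_combination (-2 * a * t ^ 2) * I_sq

end LaplaceKernel

/-- For the 1D exponential kernel `γ_r(s) = (1/(2c³)) e^{-|s|/c}` with `c > 0`, `k > 0` and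
`c·k < 1`, the modified wavenumber `k̃ = k/√(1 − c²k²)` satisfies the nonlocal dispersion
relation `∫_ℝ (1 − e^{i k̃ s}) γ_r(s) ds = k²`. -/
theorem dispersion_relation_exponential_kernel (c k : ℝ) (hc : 0 < c) (hk : 0 < k)
    (hck : c * k < 1) (ktilde : ℝ) (hkt : ktilde = k / Real.sqrt (1 - c ^ 2 * k ^ 2)) :
    ∫ s : ℝ, (1 - Complex.exp (Complex.I * ktilde * s)) *
        (((1 / (2 * c ^ 3)) * Real.exp (-|s| / c) : ℝ) : ℂ) = (k : ℂ) ^ 2 := by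
  have ha : 0 < c⁻¹ := inv_pos.2 hc
  have hintegrand (s : ℝ) : (1 - cexp (I * ktilde * s)) *
      (((1 / (2 * c ^ 3)) * Real.exp (-|s| / c) : ℝ) : ℂ) =
      (1 / (2 * c ^ 3) : ℝ) * (cexp (I * (0 : ℝ) * s) * (Real.exp (-c⁻¹ * |s|) : ℂ) -
        cexp (I * ktilde * s) * (Real.exp (-c⁻¹ * |s|) : ℂ)) := by
    rw [show -|s| / c = -c⁻¹ * |s| by ring, ofReal_zero, mul_zero, zero_mul, Complex.exp_zero]
    push_cast
    ring
  have hkt_sq : (ktilde : ℂ) ^ 2 * (1 - c ^ 2 * k ^ 2) = k ^ 2 := by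
    have h : 0 < 1 - c ^ 2 * k ^ 2 := by nlinarith [mul_pos hc hk]
    have hreal : ktilde ^ 2 * (1 - c ^ 2 * k ^ 2) = k ^ 2 := by
      rw [hkt, div_pow, Real.sq_sqrt h.le, div_mul_cancel₀ _ h.ne']
    exact_mod_cast hreal
  simp_rw [hintegrand]
  rw [integral_const_mul, integral_sub (integrable_cexp_mul_exp_neg_mul_abs 0 ha)
      (integrable_cexp_mul_exp_neg_mul_abs ktilde ha),
    integral_cexp_mul_exp_neg_mul_abs 0 ha, integral_cexp_mul_exp_neg_mul_abs ktilde ha]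
  have hc0 : (c : ℂ) ≠ 0 := by exact_mod_cast hc.ne'
  have hden : (1 + c ^ 2 * ktilde ^ 2 : ℂ) ≠ 0 := by
    exact_mod_cast (by positivity : 1 + c ^ 2 * ktilde ^ 2 ≠ 0)
  push_cast
  field_simp
  linear_combination (c ^ 2 : ℂ) * hkt_sq
end

section
/- Let l > 0, k > 0, and k̃ > 0 real. Let f ∈ L²(ℝ) with support contained in Ω = [−l, l]. Let σ: ℝ → ℝ be nonnegative with σ = 0 on [−l, l], let η(x) = |∫₀ˣ σ(t) dt|, and let z = z₁ + i z₂ with z₁ ≥ 0, z₂ > 0. Define x̃ = x + (z/k) ∫₀ˣ σ(t) dt, and define the PML-continued averaged solution for |x| > l by u^a(x̃) = ∫_{−l}^{l} G_{x̃}(y) f(y) dy, where G_{x̃}(y) = − e^{i k̃ (x̃ − y)}/(2 i k̃) when x > l and G_{x̃}(y) = − e^{−i k̃ (x̃ − y)}/(2 i k̃) when x < −l. Then for all |x| > l, |u^a(x̃)| ≤ (√l / (√2 · k̃)) · e^{−(k̃/k) z₂ η(x)} · ‖f‖_{L²(Ω)}. -/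
/-!
For `y ∈ [-l, l]` the Green kernel has modulus `e^{-k̃ Im x̃} / (2k̃)` (outgoing branch) or
`e^{k̃ Im x̃} / (2k̃)` (incoming branch), with `Im x̃ = (z₂/k) ∫₀ˣ σ`. Since `σ ≥ 0`, the integral
`∫₀ˣ σ` has the sign of `x`, so both moduli equal `e^{-(k̃/k) z₂ η(x)} / (2k̃)`, independently
of `y`. Cauchy–Schwarz on `[-l, l]` then gives `∫ |f| ≤ √(2l) ‖f‖_{L²(Ω)}`.
-/

open MeasureTheory

theorem integral_norm_le_sqrt_measureReal_univ_mul_sqrt {α E : Type*} [MeasurableSpace α]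
    {μ : Measure α} [IsFiniteMeasure μ] [NormedAddCommGroup E] {f : α → E}
    (hf : MemLp f 2 μ) :
    ∫ a, ‖f a‖ ∂μ ≤ √(μ.real Set.univ) * √(∫ a, ‖f a‖ ^ 2 ∂μ) := by
  have h := integral_mul_le_Lp_mul_Lq_of_nonneg Real.HolderConjugate.two_two
    (ae_of_all μ fun a => norm_nonneg (f a)) (ae_of_all μ fun _ => zero_le_one)
    (by simpa using hf.norm) (memLp_const (1 : ℝ))
  simp only [mul_one, one_pow, integral_const, smul_eq_mul, Real.rpow_two,
    ← Real.sqrt_eq_rpow] at h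
  rw [mul_comm]
  exact h

theorem intervalIntegral.integral_norm_le_sqrt_sub_mul_sqrt {E : Type*} [NormedAddCommGroup E]
    {f : ℝ → E} {a b : ℝ} (hab : a ≤ b) (hf : MemLp f 2 (volume.restrict (Set.Ioc a b))) :
    ∫ y in a..b, ‖f y‖ ≤ √(b - a) * √(∫ y in a..b, ‖f y‖ ^ 2) := by
  simpa [intervalIntegral.integral_of_le hab, Real.volume_real_Ioc_of_le hab] using
    integral_norm_le_sqrt_measureReal_univ_mul_sqrt hf

theorem intervalIntegral.norm_integral_mul_le_of_norm_le {𝕜 : Type*} [RCLike 𝕜] {g f : ℝ → 𝕜}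
    {a b C : ℝ} (hab : a ≤ b) (hf : MemLp f 2 (volume.restrict (Set.Ioc a b)))
    (hg : ∀ y, ‖g y‖ ≤ C) :
    ‖∫ y in a..b, g y * f y‖ ≤ C * (√(b - a) * √(∫ y in a..b, ‖f y‖ ^ 2)) := by
  have hC : 0 ≤ C := (norm_nonneg _).trans (hg a)
  have hfi : IntervalIntegrable (fun y => ‖f y‖) volume a b :=
    (intervalIntegrable_iff_integrableOn_Ioc_of_le hab).2 (hf.integrable one_le_two).norm
  calc ‖∫ y in a..b, g y * f y‖ ≤ ∫ y in a..b, C * ‖f y‖ :=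
        intervalIntegral.norm_integral_le_of_norm_le hab
          (ae_of_all _ fun y _ => (norm_mul_le _ _).trans (by gcongr; exact hg y))
          (hfi.const_mul C)
    _ = C * ∫ y in a..b, ‖f y‖ := intervalIntegral.integral_const_mul _ _
    _ ≤ C * (√(b - a) * √(∫ y in a..b, ‖f y‖ ^ 2)) :=
        mul_le_mul_of_nonneg_left (intervalIntegral.integral_norm_le_sqrt_sub_mul_sqrt hab hf) hC

theorem intervalIntegral.integral_nonpos_of_ge {f : ℝ → ℝ} {a b : ℝ} (hba : b ≤ a)
    (hf : ∀ t, 0 ≤ f t) : ∫ t in a..b, f t ≤ 0 := by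
  rw [intervalIntegral.integral_symm, neg_nonpos]
  exact intervalIntegral.integral_nonneg hba fun t _ => hf t

namespace Complex

theorem norm_neg_exp_div_two_mul_I_mul (w : ℂ) {κ : ℝ} (hκ : 0 < κ) :
    ‖-exp w / (2 * I * κ)‖ = Real.exp w.re / (2 * κ) := by
  simp [norm_exp, abs_of_pos hκ]

theorem re_I_mul_ofReal_mul (κ : ℝ) (w : ℂ) : (I * κ * w).re = -(κ * w.im) := by
  simp

theorem re_neg_I_mul_ofReal_mul (κ : ℝ) (w : ℂ) : (-I * κ * w).re = κ * w.im := by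
  simp

theorem im_ofReal_add_div_mul_ofReal_sub_ofReal (x η y k z₁ z₂ : ℝ) :
    ((x : ℂ) + (z₁ + z₂ * I) / k * η - y).im = z₂ / k * η := by
  simp

end Complex

theorem pml_decay_averaged_real_wavenumber_general (l k ktilde : ℝ) (hl : 0 < l)
    (hkt : 0 < ktilde)
    (f : ℝ → ℂ) (hf : MemLp f 2 volume)
    (σ : ℝ → ℝ) (hσnn : ∀ t : ℝ, 0 ≤ σ t)
    (z₁ z₂ : ℝ) :
    ∀ x : ℝ, l < |x| →
      ‖(∫ y in (-l)..l,
          (if l < x then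
            -Complex.exp (Complex.I * (ktilde : ℂ) *
              (((x : ℂ) + (((z₁ : ℂ) + (z₂ : ℂ) * Complex.I) / (k : ℂ)) *
                ((∫ t in (0:ℝ)..x, σ t : ℝ) : ℂ)) - (y : ℂ))) / (2 * Complex.I * (ktilde : ℂ))
          else
            -Complex.exp (-Complex.I * (ktilde : ℂ) *
              (((x : ℂ) + (((z₁ : ℂ) + (z₂ : ℂ) * Complex.I) / (k : ℂ)) *
                ((∫ t in (0:ℝ)..x, σ t : ℝ) : ℂ)) - (y : ℂ))) / (2 * Complex.I * (ktilde : ℂ)))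
          * f y)‖
        ≤ (Real.sqrt l / (Real.sqrt 2 * ktilde)) *
            Real.exp (-(ktilde / k) * z₂ * |∫ t in (0:ℝ)..x, σ t|) *
            Real.sqrt (∫ y in (-l)..l, ‖f y‖ ^ 2) := by
  intro x hx
  set η := ∫ t in (0:ℝ)..x, σ t
  refine (intervalIntegral.norm_integral_mul_le_of_norm_le (by linarith) (hf.restrict _)
    (C := Real.exp (-(ktilde / k) * z₂ * |η|) / (2 * ktilde)) fun y => ?_).trans_eq ?_
  · split_ifs with hxl
    · have hη : 0 ≤ η := intervalIntegral.integral_nonneg (by linarith) fun t _ => hσnn t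
      rw [Complex.norm_neg_exp_div_two_mul_I_mul _ hkt, Complex.re_I_mul_ofReal_mul,
        Complex.im_ofReal_add_div_mul_ofReal_sub_ofReal, abs_of_nonneg hη]
      exact le_of_eq (by ring_nf)
    · have hx0 : x ≤ 0 := by linarith [(lt_abs.1 hx).resolve_left hxl]
      have hη : η ≤ 0 := intervalIntegral.integral_nonpos_of_ge hx0 hσnn
      rw [Complex.norm_neg_exp_div_two_mul_I_mul _ hkt, Complex.re_neg_I_mul_ofReal_mul,
        Complex.im_ofReal_add_div_mul_ofReal_sub_ofReal, abs_of_nonpos hη]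
      exact le_of_eq (by ring_nf)
  · have h2 : √2 * √2 = 2 := Real.mul_self_sqrt zero_le_two
    rw [show l - -l = 2 * l by ring, Real.sqrt_mul zero_le_two]
    field_simp
    linear_combination √(∫ y in (-l)..l, ‖f y‖ ^ 2) * h2

/-- Theorem 3.1, case 1 (real `k̃ > 0`), bound for the averaged solution: with the PML
stretching `x̃ = x + (z/k)∫₀ˣ σ`, `z = z₁ + i z₂` (`z₁ ≥ 0`, `z₂ > 0`), for `|x| > l`,
`|u^a(x̃)| ≤ (√l/(√2 k̃)) e^{−(k̃/k) z₂ η(x)} ‖f‖_{L²(Ω)}` where `η(x) = |∫₀ˣ σ|`. -/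
theorem pml_decay_averaged_real_wavenumber (l k ktilde : ℝ) (hl : 0 < l) (hk : 0 < k)
    (hkt : 0 < ktilde)
    (f : ℝ → ℂ) (hf : MemLp f 2 volume)
    (hsupp : ∀ x : ℝ, x ∉ Set.Icc (-l) l → f x = 0)
    (σ : ℝ → ℝ) (hσint : LocallyIntegrable σ) (hσnn : ∀ t : ℝ, 0 ≤ σ t)
    (hσ0 : ∀ t ∈ Set.Icc (-l) l, σ t = 0)
    (z₁ z₂ : ℝ) (hz₁ : 0 ≤ z₁) (hz₂ : 0 < z₂) :
    ∀ x : ℝ, l < |x| →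
      ‖(∫ y in (-l)..l,
          (if l < x then
            -Complex.exp (Complex.I * (ktilde : ℂ) *
              (((x : ℂ) + (((z₁ : ℂ) + (z₂ : ℂ) * Complex.I) / (k : ℂ)) *
                ((∫ t in (0:ℝ)..x, σ t : ℝ) : ℂ)) - (y : ℂ))) / (2 * Complex.I * (ktilde : ℂ))
          else
            -Complex.exp (-Complex.I * (ktilde : ℂ) *
              (((x : ℂ) + (((z₁ : ℂ) + (z₂ : ℂ) * Complex.I) / (k : ℂ)) *
                ((∫ t in (0:ℝ)..x, σ t : ℝ) : ℂ)) - (y : ℂ))) / (2 * Complex.I * (ktilde : ℂ)))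
          * f y)‖
        ≤ (Real.sqrt l / (Real.sqrt 2 * ktilde)) *
            Real.exp (-(ktilde / k) * z₂ * |∫ t in (0:ℝ)..x, σ t|) *
            Real.sqrt (∫ y in (-l)..l, ‖f y‖ ^ 2) :=
  pml_decay_averaged_real_wavenumber_general l k ktilde hl hkt f hf σ hσnn z₁ z₂
end
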